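/- Let (X,d) be a finite metric space and let ℘ = sup{p ≥ 0 : (X,d) has p-negative type}. If ℘ < ∞, then there exists a normalized (s,t)-simplex D(ω) = [a_j(m_j); b_i(n_i)]_{s,t} in X such that Σ_{1≤j1<j2≤s} m_{j1} m_{j2} d(a_{j1},a_{j2})^℘ + Σ_{1≤i1<i2≤t} n_{i1} n_{i2} d(b_{i1},b_{i2})^℘ = Σ_{j=1}^{s} Σ_{i=1}^{t} m_j n_i d(a_j,b_i)^℘, i.e. γ_D^℘(ω) = 0. -/

import Mathlib

open scoped BigOperators

/-- The kernel `d(x,y)^p`, with the convention that it vanishes on the diagonal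
(this matters only when `p = 0`). -/
noncomputable def negKer {X : Type*} [MetricSpace X] (p : ℝ) (x y : X) : ℝ :=
  @ite ℝ (x = y) (Classical.dec _) 0 (dist x y ^ p)

/-- `(X,d)` has `p`-negative type: for all `k ≥ 2`, pairwise distinct points
`x₁,…,x_k` and reals `η₁,…,η_k` summing to zero,
`∑_{i,j} d(xᵢ,xⱼ)^p ηᵢ ηⱼ ≤ 0`. -/
def HasNegType (X : Type*) [MetricSpace X] (p : ℝ) : Prop :=
  ∀ (k : ℕ), 2 ≤ k → ∀ (x : Fin k → X), Function.Injective x →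
    ∀ (η : Fin k → ℝ), (∑ i, η i) = 0 →
      (∑ i, ∑ j, negKer p (x i) (x j) * η i * η j) ≤ 0

/-- `(X,d)` has strict `p`-negative type: `p`-negative type, with strict
inequality whenever `η ≠ 0`. -/
def HasStrictNegType (X : Type*) [MetricSpace X] (p : ℝ) : Prop :=
  HasNegType X p ∧
  ∀ (k : ℕ), 2 ≤ k → ∀ (x : Fin k → X), Function.Injective x →
    ∀ (η : Fin k → ℝ), (∑ i, η i) = 0 → η ≠ 0 →
      (∑ i, ∑ j, negKer p (x i) (x j) * η i * η j) < 0

/-- A normalized `(s,t)`-simplex in `X`: `s+t` pairwise distinct points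
`a₁,…,a_s,b₁,…,b_t` with positive weights `m`, `n`, each family summing to `1`. -/
structure IsNormSimplex {X : Type*} [MetricSpace X] {s t : ℕ}
    (a : Fin s → X) (b : Fin t → X) (m : Fin s → ℝ) (n : Fin t → ℝ) : Prop where
  inj_a : Function.Injective a
  inj_b : Function.Injective b
  disj : ∀ j i, a j ≠ b i
  m_pos : ∀ j, 0 < m j
  n_pos : ∀ i, 0 < n i
  m_sum : (∑ j, m j) = 1
  n_sum : (∑ i, n i) = 1

/-- The `p`-negative type simplex gap `γ_D^p(ω)` of a loaded `(s,t)`-simplex. -/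
noncomputable def simplexGap {X : Type*} [MetricSpace X] (p : ℝ) {s t : ℕ}
    (a : Fin s → X) (b : Fin t → X) (m : Fin s → ℝ) (n : Fin t → ℝ) : ℝ :=
  (∑ j, ∑ i, m j * n i * dist (a j) (b i) ^ p)
    - (∑ j₁, ∑ j₂, if j₁ < j₂ then m j₁ * m j₂ * dist (a j₁) (a j₂) ^ p else 0)
    - (∑ i₁, ∑ i₂, if i₁ < i₂ then n i₁ * n i₂ * dist (b i₁) (b i₂) ^ p else 0)

/-!
Since the kernel `d(x,y)^p` depends continuously on `p`, having `p`-negative type is a closed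
condition, so the supremum `℘` is attained. For a finite space, strict negative type (the form
`η ↦ ∑ d(x,y)^p η_x η_y` being negative at every nonzero `η` with `∑ η = 0`) is an open condition
in `p`, by compactness of the unit sphere of the hyperplane `∑ η = 0`; as `℘` is maximal it must
fail there, so the form vanishes at some nonzero zero-sum `η`. Normalising the positive and
negative parts of `η` to unit mass yields a simplex whose gap is `-½` times the form at `η / ∑ η⁺`,
which is zero.
-/

open Topology Matrix Function

section NegType

variable {X : Type*} [MetricSpace X]

lemma negKer_self (p : ℝ) (x : X) : negKer p x x = 0 := if_pos rfl

lemma negKer_of_ne {x y : X} (h : x ≠ y) (p : ℝ) : negKer p x y = dist x y ^ p := if_neg h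

lemma negKer_comm (p : ℝ) (x y : X) : negKer p x y = negKer p y x := by
  rcases eq_or_ne x y with rfl | h
  · rfl
  · rw [negKer_of_ne h, negKer_of_ne h.symm, dist_comm]

@[fun_prop]
lemma continuous_negKer (x y : X) : Continuous fun p => negKer p x y := by
  rcases eq_or_ne x y with rfl | h
  · simp only [negKer_self]
    exact continuous_const
  · simp only [negKer_of_ne h]
    exact continuous_const.rpow continuous_id fun _ => Or.inl (dist_ne_zero.2 h)

lemma hasNegType_zero : HasNegType X 0 := by
  intro k _ x hx η hη
  have hterm : ∀ i j, negKer 0 (x i) (x j) * η i * η j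
      = η i * η j - if i = j then η i * η j else 0 := by
    intro i j
    rcases eq_or_ne i j with rfl | h
    · simp [negKer_self]
    · rw [negKer_of_ne (hx.ne h), Real.rpow_zero, if_neg h]
      ring
  simp only [hterm, Finset.sum_sub_distrib, Finset.sum_ite_eq, Finset.mem_univ, if_true,
    ← Finset.mul_sum, hη, mul_zero, zero_sub]
  exact Finset.sum_nonpos fun i _ => neg_nonpos.2 (mul_self_nonneg _)

variable (X) in
lemma isClosed_setOf_hasNegType : IsClosed {p : ℝ | HasNegType X p} := by
  simp only [HasNegType, Set.ofPred_forall]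
  exact isClosed_iInter fun k => isClosed_iInter fun _ => isClosed_iInter fun x =>
    isClosed_iInter fun _ => isClosed_iInter fun η => isClosed_iInter fun _ =>
      isClosed_le (by fun_prop) continuous_const

variable (X) in
noncomputable def negKerMatrix (p : ℝ) : Matrix X X ℝ := Matrix.of fun x y => negKer p x y

lemma continuous_negKerMatrix : Continuous (negKerMatrix X) :=
  continuous_matrix fun x y => continuous_negKer x y

lemma negKerMatrix_transpose (p : ℝ) : (negKerMatrix X p)ᵀ = negKerMatrix X p :=
  Matrix.ext fun x y => negKer_comm p y x

end NegType

-- `extend c μ 0 : X → R` is the weight vector `∑ i, μ i • δ (c i)` of an injective family.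
section Extend

variable {ι κ X R : Type*} [Fintype ι] [Fintype κ] [Fintype X] [CommSemiring R]

lemma dotProduct_extend {c : ι → X} (hc : Injective c) (μ : ι → R) (v : X → R) :
    v ⬝ᵥ extend c μ 0 = ∑ i, v (c i) * μ i := by
  classical
  rw [dotProduct, ← Finset.sum_subset (Finset.subset_univ (Finset.univ.image c)),
    Finset.sum_image hc.injOn]
  · simp only [hc.extend_apply]
  · intro x _ hx
    rw [extend_apply' _ _ _ fun ⟨i, hi⟩ => hx (hi ▸ Finset.mem_image_of_mem c (Finset.mem_univ i)),
      Pi.zero_apply, mul_zero]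

lemma extend_dotProduct_mulVec_extend {c : ι → X} {d : κ → X} (hc : Injective c)
    (hd : Injective d) (K : Matrix X X R) (μ : ι → R) (ν : κ → R) :
    extend c μ 0 ⬝ᵥ K *ᵥ extend d ν 0 = ∑ i, ∑ j, K (c i) (d j) * μ i * ν j := by
  rw [dotProduct_comm, dotProduct_extend hc]
  refine Finset.sum_congr rfl fun i _ => ?_
  rw [mulVec, dotProduct_extend hd, Finset.sum_mul]
  exact Finset.sum_congr rfl fun j _ => by ring

lemma sum_extend {c : ι → X} (hc : Injective c) (μ : ι → R) :
    ∑ x, extend c μ 0 x = ∑ i, μ i := by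
  simpa [dotProduct] using dotProduct_extend hc μ 1

end Extend

lemma extend_comp_equiv {ι X R : Type*} [Zero R] (e : ι ≃ X) (η : X → R) :
    extend e (η ∘ e) 0 = η :=
  funext fun x => by simp

lemma exists_extend_fin_eq {X R : Type*} [Fintype X] [Zero R] (ξ : X → R) :
    ∃ (s : ℕ) (a : Fin s → X), Injective a ∧ (∀ j, ξ (a j) ≠ 0) ∧
      extend a (fun j => ξ (a j)) 0 = ξ := by
  classical
  let A := Finset.univ.filter fun x => ξ x ≠ 0
  let a : Fin A.card → X := fun j => A.equivFin.symm j
  have ha : Injective a := Subtype.val_injective.comp A.equivFin.symm.injective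
  have hsupp : ∀ j, ξ (a j) ≠ 0 := fun j => (Finset.mem_filter.1 (A.equivFin.symm j).2).2
  refine ⟨A.card, a, ha, hsupp, funext fun x => ?_⟩
  by_cases hx : ξ x = 0
  · rw [hx, extend_apply' _ _ _ fun ⟨j, hj⟩ => hsupp j (by rwa [hj])]
    rfl
  · obtain ⟨j, rfl⟩ : ∃ j, a j = x := ⟨A.equivFin ⟨x, by simpa [A] using hx⟩, by simp [a]⟩
    exact ha.extend_apply _ _ _

lemma sum_sum_ite_lt_add_self {ι M : Type*} [Fintype ι] [LinearOrder ι] [AddCommMonoid M]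
    {f : ι → ι → M} (hf : ∀ i j, f i j = f j i) (hdiag : ∀ i, f i i = 0) :
    (∑ i, ∑ j, if i < j then f i j else 0) + (∑ i, ∑ j, if i < j then f i j else 0)
      = ∑ i, ∑ j, f i j := by
  have hsplit : ∀ i j, f i j = (if i < j then f i j else 0) + (if j < i then f j i else 0) := by
    intro i j
    rcases lt_trichotomy i j with h | rfl | h
    · simp [h, h.not_gt]
    · simp [hdiag]
    · simp [h, h.not_gt, hf i j]
  conv_rhs => enter [2, i, 2, j]; rw [hsplit i j]
  simp only [Finset.sum_add_distrib]
  rw [Finset.sum_comm (f := fun i j => if j < i then f j i else 0)]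

lemma eventually_forall_dotProduct_mulVec_neg {T ι : Type*} [TopologicalSpace T] [Fintype ι]
    {K : T → Matrix ι ι ℝ} (hK : Continuous K) {t₀ : T}
    (h : ∀ η : ι → ℝ, ∑ i, η i = 0 → η ≠ 0 → η ⬝ᵥ K t₀ *ᵥ η < 0) :
    ∀ᶠ t in 𝓝 t₀, ∀ η : ι → ℝ, ∑ i, η i = 0 → η ≠ 0 → η ⬝ᵥ K t *ᵥ η < 0 := by
  let S := Metric.sphere (0 : ι → ℝ) 1 ∩ {η | ∑ i, η i = 0}
  have hS : IsCompact S :=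
    (isCompact_sphere 0 1).inter_right (isClosed_eq (by fun_prop) continuous_const)
  have hform : Continuous fun z : T × (ι → ℝ) => z.2 ⬝ᵥ K z.1 *ᵥ z.2 :=
    continuous_snd.dotProduct ((hK.comp continuous_fst).matrix_mulVec continuous_snd)
  have hsphere := hS.eventually_forall_of_forall_eventually
    (P := fun t η => η ⬝ᵥ K t *ᵥ η < 0) fun η ⟨hη₁, hη₀⟩ =>
    hform.continuousAt.eventually_lt continuousAt_const
      (h η hη₀ (ne_zero_of_mem_unit_sphere ⟨η, hη₁⟩))
  filter_upwards [hsphere] with t ht η hη hne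
  have hnorm : 0 < ‖η‖ := norm_pos_iff.2 hne
  have hunit := ht (‖η‖⁻¹ • η) ⟨by simp [norm_smul, hnorm.ne'], by simp [← Finset.mul_sum, hη]⟩
  have hη' : η = ‖η‖ • (‖η‖⁻¹ • η) := by rw [smul_smul, mul_inv_cancel₀ hnorm.ne', one_smul]
  rw [hη', mulVec_smul, dotProduct_smul, smul_dotProduct, smul_eq_mul, smul_eq_mul]
  exact mul_neg_of_pos_of_neg hnorm (mul_neg_of_pos_of_neg hnorm hunit)

section FiniteSpace

variable {X : Type*} [MetricSpace X] [Fintype X]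

lemma hasNegType_iff {p : ℝ} :
    HasNegType X p ↔ ∀ η : X → ℝ, ∑ x, η x = 0 → η ⬝ᵥ negKerMatrix X p *ᵥ η ≤ 0 := by
  constructor
  · intro h η hη
    rcases lt_or_ge (Fintype.card X) 2 with hcard | hcard
    · have : Subsingleton X := Fintype.card_le_one_iff_subsingleton.1 (by omega)
      have hK : negKerMatrix X p = 0 :=
        Matrix.ext fun x y => by rw [Subsingleton.elim x y]; exact negKer_self p y
      simp [hK]
    · let e := (Fintype.equivFin X).symm
      have := h _ hcard e e.injective (η ∘ e) ((Equiv.sum_comp e η).trans hη)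
      rwa [← extend_comp_equiv e η, extend_dotProduct_mulVec_extend e.injective e.injective]
  · intro h k _ x hx η hη
    simpa [extend_dotProduct_mulVec_extend hx hx, negKerMatrix] using
      h (extend x η 0) (by rw [sum_extend hx, hη])

lemma dotProduct_negKerMatrix_comm (p : ℝ) (u v : X → ℝ) :
    u ⬝ᵥ negKerMatrix X p *ᵥ v = v ⬝ᵥ negKerMatrix X p *ᵥ u := by
  conv_lhs => rw [dotProduct_mulVec, ← negKerMatrix_transpose, vecMul_transpose, dotProduct_comm]

lemma two_mul_sum_pairs_eq {r : ℕ} {c : Fin r → X} (hc : Injective c) (p : ℝ) (w : Fin r → ℝ) :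
    2 * ∑ j₁, ∑ j₂, (if j₁ < j₂ then w j₁ * w j₂ * dist (c j₁) (c j₂) ^ p else 0)
      = extend c w 0 ⬝ᵥ negKerMatrix X p *ᵥ extend c w 0 := by
  have hterm : ∀ j₁ j₂, (if j₁ < j₂ then w j₁ * w j₂ * dist (c j₁) (c j₂) ^ p else 0)
      = if j₁ < j₂ then negKerMatrix X p (c j₁) (c j₂) * w j₁ * w j₂ else 0 := by
    intro j₁ j₂
    split_ifs with h
    · rw [negKerMatrix, of_apply, negKer_of_ne (hc.ne h.ne)]
      ring
    · rfl
  simp only [hterm, extend_dotProduct_mulVec_extend hc hc, two_mul]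
  refine sum_sum_ite_lt_add_self (fun i j => ?_) fun i => ?_
  · simp only [negKerMatrix, of_apply, negKer_comm p (c i)]
    ring
  · simp [negKerMatrix, negKer_self]

lemma simplexGap_eq_neg_half {s t : ℕ} {a : Fin s → X} {b : Fin t → X} (ha : Injective a)
    (hb : Injective b) (hab : ∀ j i, a j ≠ b i) (p : ℝ) (m : Fin s → ℝ) (n : Fin t → ℝ) :
    simplexGap p a b m n = -(1 / 2) * ((extend a m 0 - extend b n 0)
      ⬝ᵥ negKerMatrix X p *ᵥ (extend a m 0 - extend b n 0)) := by
  have hcross : ∑ j, ∑ i, m j * n i * dist (a j) (b i) ^ p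
      = extend a m 0 ⬝ᵥ negKerMatrix X p *ᵥ extend b n 0 := by
    rw [extend_dotProduct_mulVec_extend ha hb]
    refine Finset.sum_congr rfl fun j _ => Finset.sum_congr rfl fun i _ => ?_
    rw [negKerMatrix, of_apply, negKer_of_ne (hab j i)]
    ring
  have hpa := two_mul_sum_pairs_eq ha p m
  have hpb := two_mul_sum_pairs_eq hb p n
  have hsymm := dotProduct_negKerMatrix_comm p (extend a m 0) (extend b n 0)
  simp only [simplexGap, sub_dotProduct, dotProduct_sub, mulVec_sub]
  linarith

lemma exists_simplexGap_eq_zero_of_null {p : ℝ} {η : X → ℝ} (hsum : ∑ x, η x = 0)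
    (hne : η ≠ 0) (hnull : η ⬝ᵥ negKerMatrix X p *ᵥ η = 0) :
    ∃ (s t : ℕ) (a : Fin s → X) (b : Fin t → X) (m : Fin s → ℝ) (n : Fin t → ℝ),
      IsNormSimplex a b m n ∧ simplexGap p a b m n = 0 := by
  set M := ∑ x, η⁺ x
  have hsum_neg : ∑ x, η⁻ x = M := by
    have := congrArg (fun f : X → ℝ => ∑ x, f x) (posPart_sub_negPart η)
    simp only [Pi.sub_apply, Finset.sum_sub_distrib] at this
    linarith
  have hM : 0 < M := by
    refine (Finset.sum_nonneg fun x _ => posPart_nonneg (η x)).lt_of_ne fun h => hne ?_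
    have hpos : η⁺ = 0 := funext fun x =>
      (Finset.sum_eq_zero_iff_of_nonneg fun x _ => posPart_nonneg (η x)).1 h.symm x
        (Finset.mem_univ x)
    have hneg : η⁻ = 0 := funext fun x =>
      (Finset.sum_eq_zero_iff_of_nonneg fun x _ => negPart_nonneg (η x)).1
        (hsum_neg.trans h.symm) x (Finset.mem_univ x)
    rw [← posPart_sub_negPart η, hpos, hneg, sub_zero]
  obtain ⟨s, a, ha, ha_ne, ha_ext⟩ := exists_extend_fin_eq (M⁻¹ • η⁺)
  obtain ⟨t, b, hb, hb_ne, hb_ext⟩ := exists_extend_fin_eq (M⁻¹ • η⁻)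
  have hM_inv : 0 ≤ M⁻¹ := inv_nonneg.2 hM.le
  have hm_pos : ∀ j, 0 < (M⁻¹ • η⁺) (a j) := fun j =>
    (smul_nonneg hM_inv (posPart_nonneg (η (a j)))).lt_of_ne' (ha_ne j)
  have hn_pos : ∀ i, 0 < (M⁻¹ • η⁻) (b i) := fun i =>
    (smul_nonneg hM_inv (negPart_nonneg (η (b i)))).lt_of_ne' (hb_ne i)
  have hab : ∀ j i, a j ≠ b i := by
    intro j i h
    have h₁ : 0 < η (a j) := posPart_pos_iff.1 (pos_of_mul_pos_right (hm_pos j) hM_inv)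
    have h₂ : η (b i) < 0 := negPart_pos_iff.1 (pos_of_mul_pos_right (hn_pos i) hM_inv)
    rw [h] at h₁
    linarith
  have hsum_smul : ∀ ξ : X → ℝ, ∑ x, ξ x = M → ∑ x, (M⁻¹ • ξ) x = 1 := fun ξ hξ => by
    simp only [Pi.smul_apply, smul_eq_mul, ← Finset.mul_sum, hξ, inv_mul_cancel₀ hM.ne']
  refine ⟨s, t, a, b, _, _, ⟨ha, hb, hab, hm_pos, hn_pos, ?_, ?_⟩, ?_⟩
  · rw [← sum_extend ha, ha_ext, hsum_smul _ rfl]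
  · rw [← sum_extend hb, hb_ext, hsum_smul _ hsum_neg]
  · rw [simplexGap_eq_neg_half ha hb hab, ha_ext, hb_ext, ← smul_sub, posPart_sub_negPart,
      mulVec_smul, dotProduct_smul, smul_dotProduct, hnull]
    simp

end FiniteSpace

/-- If the supremal `p`-negative type `℘` of a finite metric space is finite,
then some normalized `(s,t)`-simplex has `γ_D^℘(ω) = 0`, i.e. equality holds
in the generalized roundness inequality with exponent `℘`. -/
theorem exists_simplexGap_zero_at_sup {X : Type*} [MetricSpace X] [Fintype X]
    (hbdd : BddAbove {p : ℝ | 0 ≤ p ∧ HasNegType X p}) :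
    ∃ (s t : ℕ) (a : Fin s → X) (b : Fin t → X) (m : Fin s → ℝ) (n : Fin t → ℝ),
      IsNormSimplex a b m n ∧
      simplexGap (sSup {p : ℝ | 0 ≤ p ∧ HasNegType X p}) a b m n = 0 := by
  set P := {p : ℝ | 0 ≤ p ∧ HasNegType X p}
  have hsup : sSup P ∈ P :=
    (isClosed_Ici.inter (isClosed_setOf_hasNegType X)).csSup_mem
      ⟨0, le_refl (0 : ℝ), hasNegType_zero⟩ hbdd
  obtain ⟨η, hsum, hne, hnull⟩ : ∃ η : X → ℝ, ∑ x, η x = 0 ∧ η ≠ 0 ∧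
      η ⬝ᵥ negKerMatrix X (sSup P) *ᵥ η = 0 := by
    by_contra! hstrict
    -- otherwise strict negative type at `sSup P` would persist slightly beyond it
    obtain ⟨q, hq, hq_neg⟩ := (eventually_forall_dotProduct_mulVec_neg continuous_negKerMatrix
      fun η hη hne => (hasNegType_iff.1 hsup.2 η hη).lt_of_ne (hstrict η hη hne)).exists_gt
    refine (le_csSup hbdd ⟨hsup.1.trans hq.le, hasNegType_iff.2 fun η hη => ?_⟩).not_gt hq
    rcases eq_or_ne η 0 with rfl | hne
    · simp
    · exact (hq_neg η hη hne).le
  exact exists_simplexGap_eq_zero_of_null hsum hne hnull
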